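/- arXiv:2502.20711 — 4 statements merged into one kernel-verified Lean document; each statement's English description precedes it below -/
import Mathlib

section
/- Let S be a nonempty finite set of nonzero complex numbers and let z be a complex number such that {e^z * s : s ∈ S} = S. Then there exists a rational number q with z = q * π * i (in particular, the real part of z is zero). -/
/-- If `S` is a nonempty finite set of nonzero complex numbers and multiplication by `e^z`
maps `S` onto itself, then `z` is a rational multiple of `π i`. -/
theorem stmt_1 (S : Set ℂ) (hfin : S.Finite) (hne : S.Nonempty)
    (h0 : ∀ s ∈ S, s ≠ 0) (z : ℂ)
    (hz : (fun s => Complex.exp z * s) '' S = S) :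
    ∃ q : ℚ, z = (q : ℂ) * (Real.pi : ℂ) * Complex.I := by
  obtain ⟨s, hs⟩ := hne
  have hstep : ∀ x ∈ S, Complex.exp z * x ∈ S := by
    intro x hx
    rw [← hz]; exact ⟨x, hx, rfl⟩
  have hpow : ∀ n : ℕ, Complex.exp z ^ n * s ∈ S := by
    intro n
    induction n with
    | zero => simpa using hs
    | succ n ih =>
      have := hstep _ ih
      rw [pow_succ]
      convert this using 1
      ring
  haveI : Finite S := hfin
  obtain ⟨a, b, hab, heq⟩ := Finite.exists_ne_map_eq_of_infinite
    (fun n : ℕ => (⟨Complex.exp z ^ n * s, hpow n⟩ : S))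
  wlog hlt : a < b generalizing a b
  · exact this b a hab.symm heq.symm (by omega)
  have heq' : Complex.exp z ^ a * s = Complex.exp z ^ b * s := congrArg Subtype.val heq
  have hs0 := h0 s hs
  have hea : Complex.exp z ^ a ≠ 0 := pow_ne_zero _ (Complex.exp_ne_zero z)
  have hk : Complex.exp z ^ (b - a) = 1 := by
    have : Complex.exp z ^ a * (Complex.exp z ^ (b - a) * s) = Complex.exp z ^ a * (1 * s) := by
      rw [← mul_assoc, ← pow_add, Nat.add_sub_cancel' hlt.le, one_mul, ← heq']
    have := mul_left_cancel₀ hea this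
    exact mul_right_cancel₀ hs0 (by simpa using this)
  rw [← Complex.exp_nat_mul] at hk
  obtain ⟨n, hn⟩ := Complex.exp_eq_one_iff.mp hk
  have hba0 : ((b - a : ℕ) : ℂ) ≠ 0 :=
    Nat.cast_ne_zero.mpr (Nat.sub_pos_of_lt hlt).ne'
  refine ⟨(2 * n : ℤ) / ((b - a : ℕ) : ℤ), ?_⟩
  have hz' : z = (n : ℂ) * (2 * Real.pi * Complex.I) / ((b - a : ℕ) : ℂ) := by
    field_simp at hn ⊢
    linear_combination hn
  rw [hz']
  push_cast
  field_simp
end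

section
/- Let V be a real vector space, let W be a group acting on V by linear automorphisms, and let R ⊆ V be a nonempty finite W-invariant subset. Let Z : V → ℂ be an ℝ-linear map such that Z(α) ≠ 0 for every α ∈ R. Suppose w ∈ W and z ∈ ℂ satisfy Z(w⁻¹ · α) = e^z · Z(α) for all α ∈ R. Then there exists a rational number q with z = q * π * i. -/
/-- Let `W` act on a real vector space `V` by linear automorphisms, let `R` be a nonempty
finite `W`-invariant subset, and let `Z : V → ℂ` be ℝ-linear and nonvanishing on `R`.
If `Z (w⁻¹ • α) = e^z * Z α` for all `α ∈ R`, then `z ∈ ℚ π i`. -/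
theorem stmt_2 {V : Type*} [AddCommGroup V] [Module ℝ V]
    {W : Type*} [Group W] (ρ : W →* (V ≃ₗ[ℝ] V))
    (R : Set V) (hfin : R.Finite) (hne : R.Nonempty)
    (hinv : ∀ (g : W) (α : V), α ∈ R → ρ g α ∈ R)
    (Z : V →ₗ[ℝ] ℂ) (hZ : ∀ α ∈ R, Z α ≠ 0)
    (w : W) (z : ℂ)
    (h : ∀ α ∈ R, Z (ρ w⁻¹ α) = Complex.exp z * Z α) :
    ∃ q : ℚ, z = (q : ℂ) * (Real.pi : ℂ) * Complex.I := by
  obtain ⟨α₀, hα₀⟩ := hne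
  have key : ∀ n : ℕ, Complex.exp (n * z) * Z α₀ ∈ Z '' R := by
    intro n
    induction n with
    | zero => exact ⟨α₀, hα₀, by simp⟩
    | succ n ih =>
      obtain ⟨α, hα, hZα⟩ := ih
      refine ⟨ρ w⁻¹ α, hinv _ _ hα, ?_⟩
      rw [h α hα, hZα]
      push_cast
      rw [add_mul, Complex.exp_add]
      ring
  have hninj : ¬ Function.Injective (fun n : ℕ => Complex.exp (n * z) * Z α₀) := by
    intro hinj
    exact (hfin.image Z).not_infinite
      (Set.infinite_of_injective_forall_mem hinj key)
  obtain ⟨m, n, hmn, hne'⟩ := Function.not_injective_iff.mp hninj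

  have hZα₀ := hZ α₀ hα₀
  have hexp : Complex.exp ((m : ℂ) * z) = Complex.exp ((n : ℂ) * z) :=
    mul_right_cancel₀ hZα₀ hmn
  obtain ⟨k, hk⟩ := Complex.exp_eq_exp_iff_exists_int.mp hexp
  have hmn' : (m : ℂ) - n ≠ 0 := by
    intro hc
    apply hne'
    exact_mod_cast sub_eq_zero.mp hc
  refine ⟨(2 * k : ℚ) / ((m : ℚ) - n), ?_⟩
  have hmnq : (m : ℚ) - n ≠ 0 := by
    intro hc
    apply hne'
    exact_mod_cast sub_eq_zero.mp hc
  push_cast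
  field_simp
  linear_combination hk
end

section
/- Let C be a pretriangulated category with shift by ℤ, and let t be a t-structure on C with heart A having only finitely many isomorphism classes of simple objects. Let G be a group and suppose given, for each g ∈ G, an equivalence Σ_g : C ≌ C whose underlying functor commutes with the shift, together with isomorphisms Σ_{g·h} ≅ Σ_g ∘ Σ_h for all g, h ∈ G and Σ_1 ≅ id_C. Assume: (faithfulness) for g ∈ G, if Σ_g is isomorphic to the identity functor then g = 1; (rigidity) for every g ∈ G and a ∈ ℤ, if Σ_g(L) ≅ L⟦a⟧ for every simple object L of A, then Σ_g is isomorphic to the shift functor ⟦a⟧. Suppose β ∈ G and m ∈ ℤ are such that for every object X of A, the object Σ_β(X)⟦-m⟧ is isomorphic to an object of A, and Σ_{β⁻¹}(X)⟦m⟧ is isomorphic to an object of A. Then β is periodic: there exists an integer k ≥ 1 such that β^k is central in G. -/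
open CategoryTheory Limits CategoryTheory.Triangulated CategoryTheory.Pretriangulated

/-- The heart of a t-structure, as a property of objects: `X` lies in the heart iff it is
both `≤ 0` and `≥ 0`. -/
def tHeartProp {C : Type*} [Category C] [Preadditive C] [HasZeroObject C] [HasShift C ℤ]
    [∀ n : ℤ, (shiftFunctor C n).Additive] [Pretriangulated C]
    (t : TStructure C) (X : C) : Prop :=
  t.le 0 X ∧ t.ge 0 X

/-- Full subcategories of a preadditive category are preadditive. -/
instance fullSubcategoryPreadditive {C : Type*} [Category C] [Preadditive C] (P : C → Prop) :
    Preadditive (ObjectProperty.FullSubcategory P) :=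
  CategoryTheory.Preadditive.inducedCategory ObjectProperty.FullSubcategory.obj

namespace Stmt6Aux

attribute [local instance] CategoryTheory.isIsomorphicSetoid

section Generic

variable {D : Type*} [Category D]

/-- An isomorphism in a full subcategory from an isomorphism of the underlying objects. -/
def hIso {P : D → Prop} {X Y : ObjectProperty.FullSubcategory P} (i : X.obj ≅ Y.obj) : X ≅ Y where
  hom := ObjectProperty.homMk i.hom
  inv := ObjectProperty.homMk i.inv
  hom_inv_id := by ext; exact i.hom_inv_id
  inv_hom_id := by ext; exact i.inv_hom_id

/-- A fully faithful, zero-preserving, essentially surjective endofunctor preserves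
simplicity of objects. -/
theorem simple_lift [HasZeroMorphisms D] (F : D ⥤ D) [F.Full] [F.Faithful]
    (hz : ∀ (X Y : D), F.map (0 : X ⟶ Y) = (0 : F.obj X ⟶ F.obj Y))
    (hs : ∀ Y : D, ∃ Z : D, Nonempty (F.obj Z ≅ Y))
    (X : D) [Simple X] : Simple (F.obj X) := by
  constructor
  intro Y f hf
  obtain ⟨Z, ⟨u⟩⟩ := hs Y
  have hmap : F.map (F.preimage (u.hom ≫ f)) = u.hom ≫ f := F.map_preimage _
  set g := F.preimage (u.hom ≫ f) with hg
  have mFg : Mono (F.map g) := by rw [hmap]; infer_instance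
  have mg : Mono g := F.mono_of_mono_map mFg
  constructor
  · intro hiso
    have h1 : IsIso (F.map g) := by rw [hmap]; infer_instance
    have h2 : IsIso g := isIso_of_fully_faithful F g
    have hgne : g ≠ 0 := (Simple.mono_isIso_iff_nonzero g).mp h2
    intro hf0
    apply hgne
    apply F.map_injective
    rw [hmap, hf0, hz]
    simp
  · intro hf0
    have hgne : g ≠ 0 := by
      intro hg0
      apply hf0
      have h3 : F.map g = 0 := by rw [hg0, hz]
      rw [hmap] at h3
      have h4 := congrArg (fun p => u.inv ≫ p) h3
      simpa using h4
    have h5 : IsIso g := (Simple.mono_isIso_iff_nonzero g).mpr hgne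
    have h6 : IsIso (F.map g) := inferInstance
    rw [hmap] at h6
    exact IsIso.of_isIso_comp_left u.hom f

end Generic

section Lift

variable {C : Type*} [Category C] [Preadditive C] [HasZeroObject C] [HasShift C ℤ]
    [∀ n : ℤ, (shiftFunctor C n).Additive] [Pretriangulated C]
    (t : TStructure C) (Φ : C ⥤ C)
    (h : ∀ X : C, tHeartProp t X → ∃ Y : C, tHeartProp t Y ∧ Nonempty (Φ.obj X ≅ Y))

/-- The object function of the lifted endofunctor of the heart. -/
noncomputable def liftObj (X : ObjectProperty.FullSubcategory (tHeartProp t)) : ObjectProperty.FullSubcategory (tHeartProp t) :=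
  ⟨(h X.obj X.property).choose, (h X.obj X.property).choose_spec.1⟩

/-- The comparison isomorphism. -/
noncomputable def liftIso (X : ObjectProperty.FullSubcategory (tHeartProp t)) :
    Φ.obj X.obj ≅ (liftObj t Φ h X).obj :=
  (h X.obj X.property).choose_spec.2.some

/-- The lifted endofunctor of the heart. -/
noncomputable def liftF : ObjectProperty.FullSubcategory (tHeartProp t) ⥤ ObjectProperty.FullSubcategory (tHeartProp t) where
  obj := liftObj t Φ h
  map {X Y} f := ObjectProperty.homMk (show (liftObj t Φ h X).obj ⟶ (liftObj t Φ h Y).obj from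
    (liftIso t Φ h X).inv ≫ Φ.map f.hom ≫ (liftIso t Φ h Y).hom)
  map_id X := by
    ext
    show (liftIso t Φ h X).inv ≫ Φ.map (𝟙 X.obj) ≫ (liftIso t Φ h X).hom = 𝟙 _
    simp
  map_comp {X Y Z} f g := by
    ext
    show (liftIso t Φ h X).inv ≫ Φ.map (f.hom ≫ g.hom) ≫ (liftIso t Φ h Z).hom =
      ((liftIso t Φ h X).inv ≫ Φ.map f.hom ≫ (liftIso t Φ h Y).hom) ≫
        ((liftIso t Φ h Y).inv ≫ Φ.map g.hom ≫ (liftIso t Φ h Z).hom)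
    simp

instance liftF_faithful [Φ.Faithful] : (liftF t Φ h).Faithful where
  map_injective := by
    intro X Y f g e
    have e' : (liftIso t Φ h X).inv ≫ Φ.map f.hom ≫ (liftIso t Φ h Y).hom =
        (liftIso t Φ h X).inv ≫ Φ.map g.hom ≫ (liftIso t Φ h Y).hom :=
      congrArg (fun k => k.hom) e
    have e2 := (cancel_epi ((liftIso t Φ h X).inv)).mp e'
    have e3 := (cancel_mono ((liftIso t Φ h Y).hom)).mp e2
    exact ObjectProperty.hom_ext _ (Φ.map_injective e3)

instance liftF_full [Φ.Full] [Φ.Faithful] : (liftF t Φ h).Full where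
  map_surjective := by
    intro X Y g
    refine ⟨ObjectProperty.homMk
      (Φ.preimage ((liftIso t Φ h X).hom ≫ g.hom ≫ (liftIso t Φ h Y).inv)), ?_⟩
    ext
    show (liftIso t Φ h X).inv ≫
      Φ.map (Φ.preimage ((liftIso t Φ h X).hom ≫ g.hom ≫ (liftIso t Φ h Y).inv)) ≫
        (liftIso t Φ h Y).hom = (g.hom : (liftObj t Φ h X).obj ⟶ (liftObj t Φ h Y).obj)
    rw [Φ.map_preimage]
    simp
    exact (Category.assoc _ _ _).trans ((congrArg _ (Iso.inv_hom_id _)).trans (Category.comp_id _))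

theorem liftF_map_zero [Φ.Full] (X Y : ObjectProperty.FullSubcategory (tHeartProp t)) :
    (liftF t Φ h).map (0 : X ⟶ Y) = 0 := by
  ext
  show (liftIso t Φ h X).inv ≫ Φ.map (0 : X.obj ⟶ Y.obj) ≫ (liftIso t Φ h Y).hom =
    (0 : (liftObj t Φ h X).obj ⟶ (liftObj t Φ h Y).obj)
  rw [Φ.map_zero]
  simp

end Lift

end Stmt6Aux

attribute [local instance] CategoryTheory.isIsomorphicSetoid

/-- Let a group `G` act weakly and faithfully on a pretriangulated category `C` by
shift-commuting equivalences, let `t` be a t-structure whose heart has finitely many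
isomorphism classes of simple objects, and assume the rigidity property: any `Σ g` acting
on all simples of the heart as the shift `⟦a⟧` is isomorphic to `⟦a⟧`.  If `Σ β` is t-exact
up to the shift `m`, then `β` is periodic: some positive power of `β` is central in `G`. -/
theorem stmt_6 {C : Type*} [Category C] [Preadditive C] [HasZeroObject C] [HasShift C ℤ]
    [∀ n : ℤ, (shiftFunctor C n).Additive] [Pretriangulated C]
    (t : TStructure C)
    (hfin : Finite (Skeleton (ObjectProperty.FullSubcategory
      (fun L : ObjectProperty.FullSubcategory (tHeartProp t) => Simple L))))
    {G : Type*} [Group G] (S : G → (C ≌ C))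
    (commShift : ∀ g : G, ((S g).functor).CommShift ℤ)
    (hmul : ∀ g h : G, Nonempty ((S (g * h)).functor ≅ (S h).functor ⋙ (S g).functor))
    (hone : Nonempty ((S 1).functor ≅ 𝟭 C))
    (hfaithful : ∀ g : G, Nonempty ((S g).functor ≅ 𝟭 C) → g = 1)
    (hrigid : ∀ (g : G) (a : ℤ),
      (∀ L : ObjectProperty.FullSubcategory (tHeartProp t), Simple L →
        Nonempty ((S g).functor.obj L.obj ≅ L.obj⟦(a : ℤ)⟧)) →
      Nonempty ((S g).functor ≅ shiftFunctor C a))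
    (β : G) (m : ℤ)
    (hβ : ∀ X : C, tHeartProp t X →
      ∃ Y : C, tHeartProp t Y ∧ Nonempty (((S β).functor.obj X)⟦(-m : ℤ)⟧ ≅ Y))
    (hβinv : ∀ X : C, tHeartProp t X →
      ∃ Y : C, tHeartProp t Y ∧ Nonempty (((S β⁻¹).functor.obj X)⟦(m : ℤ)⟧ ≅ Y)) :
    ∃ k : ℕ, 1 ≤ k ∧ β ^ k ∈ Subgroup.center G := by
  classical
  open Stmt6Aux in
  -- the functors inducing endofunctors of the heart
  let Φ : C ⥤ C := (S β).functor ⋙ shiftFunctor C (-m : ℤ)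
  let Ψ : C ⥤ C := (S β⁻¹).functor ⋙ shiftFunctor C (m : ℤ)
  let Fh := Stmt6Aux.liftF t Φ hβ
  haveI hFull : Fh.Full := Stmt6Aux.liftF_full t Φ hβ
  haveI hFaith : Fh.Faithful := Stmt6Aux.liftF_faithful t Φ hβ
  have hz : ∀ X Y : ObjectProperty.FullSubcategory (tHeartProp t), Fh.map (0 : X ⟶ Y) = 0 :=
    Stmt6Aux.liftF_map_zero t Φ hβ
  -- Φ ∘ Ψ is isomorphic to the identity (objectwise)
  have ic : ∀ X : C, Nonempty (Φ.obj (Ψ.obj X) ≅ X) := by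
    intro X
    haveI := commShift β
    have e4 : (S (1 : G)).functor ≅ (S β⁻¹).functor ⋙ (S β).functor := by
      have h5 := (hmul β β⁻¹).some; rwa [mul_inv_cancel] at h5
    exact ⟨(shiftFunctor C (-m : ℤ)).mapIso
        (((S β).functor.commShiftIso (m : ℤ)).app ((S β⁻¹).functor.obj X))
      ≪≫ (shiftFunctorCompIsoId C (m : ℤ) (-m : ℤ) (by ring)).app
          ((S β).functor.obj ((S β⁻¹).functor.obj X))
      ≪≫ e4.symm.app X ≪≫ hone.some.app X⟩
  -- essential surjectivity of Fh
  have hs : ∀ Y : ObjectProperty.FullSubcategory (tHeartProp t),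
      ∃ Z : ObjectProperty.FullSubcategory (tHeartProp t), Nonempty (Fh.obj Z ≅ Y) := by
    intro Y
    refine ⟨(Stmt6Aux.liftF t Ψ hβinv).obj Y, ⟨Stmt6Aux.hIso ?_⟩⟩
    exact (Stmt6Aux.liftIso t Φ hβ ((Stmt6Aux.liftF t Ψ hβinv).obj Y)).symm
      ≪≫ Φ.mapIso (Stmt6Aux.liftIso t Ψ hβinv Y).symm
      ≪≫ (ic Y.obj).some
  -- Fh preserves simple objects
  have hsimp : ∀ L : ObjectProperty.FullSubcategory (tHeartProp t), Simple L → Simple (Fh.obj L) := by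
    intro L hL
    haveI := hL
    exact Stmt6Aux.simple_lift Fh hz hs L
  -- the induced self-map on simple objects of the heart
  let Fs : ObjectProperty.FullSubcategory (fun L : ObjectProperty.FullSubcategory (tHeartProp t) => Simple L) →
      ObjectProperty.FullSubcategory (fun L : ObjectProperty.FullSubcategory (tHeartProp t) => Simple L) :=
    fun L => ⟨Fh.obj L.obj, hsimp L.obj L.property⟩
  have hFsresp : ∀ L L', L ≈ L' → Fs L ≈ Fs L' := by
    rintro L L' ⟨i⟩
    exact ⟨Stmt6Aux.hIso (Fh.mapIso ((ObjectProperty.ι _).mapIso i))⟩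
  -- the induced permutation of the skeleton
  let σ : Skeleton (ObjectProperty.FullSubcategory (fun L : ObjectProperty.FullSubcategory (tHeartProp t) => Simple L)) →
      Skeleton (ObjectProperty.FullSubcategory (fun L : ObjectProperty.FullSubcategory (tHeartProp t) => Simple L)) :=
    Quotient.map Fs hFsresp
  have hσinj : Function.Injective σ := by
    intro x y e
    obtain ⟨L, rfl⟩ := Quotient.exists_rep x
    obtain ⟨L', rfl⟩ := Quotient.exists_rep y
    have e' : Quotient.mk _ (Fs L) = Quotient.mk _ (Fs L') := e
    obtain ⟨i⟩ := Quotient.exact e'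
    exact Quotient.sound
      ⟨Stmt6Aux.hIso (Fh.preimageIso ((ObjectProperty.ι _).mapIso i))⟩
  -- some iterate of σ is the identity
  have hfixσ : ∃ c : ℕ, 1 ≤ c ∧ ∀ x, σ^[c] x = x := by
    have main : ∀ a b : ℕ, a < b → σ^[a] = σ^[b] → ∃ c : ℕ, 1 ≤ c ∧ ∀ x, σ^[c] x = x := by
      intro a b hab he
      refine ⟨b - a, by omega, fun x => ?_⟩
      have h1 : σ^[a] (σ^[b - a] x) = σ^[a] x := by
        rw [← Function.iterate_add_apply]
        rw [show a + (b - a) = b by omega, ← he]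
      exact hσinj.iterate a h1
    obtain ⟨a, b, hab, he⟩ := Finite.exists_ne_map_eq_of_infinite (fun n : ℕ => σ^[n])
    rcases hab.lt_or_gt with hlt | hlt
    · exact main a b hlt he
    · exact main b a hlt he.symm
  have hiterq : ∀ (n : ℕ) (L), σ^[n] (Quotient.mk _ L) = Quotient.mk _ (Fs^[n] L) := by
    intro n
    induction n with
    | zero => intro L; rfl
    | succ n ih =>
      intro L
      rw [Function.iterate_succ_apply]
      show σ^[n] (σ (Quotient.mk _ L)) = Quotient.mk _ (Fs^[n] (Fs L))
      have hq : σ (Quotient.mk _ L) = Quotient.mk _ (Fs L) := rfl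
      exact (congrArg (σ^[n]) hq).trans (ih (Fs L))
  have hfix : ∃ c : ℕ, 1 ≤ c ∧ ∀ L, Nonempty ((Fs^[c] L) ≅ L) := by
    obtain ⟨c, hc, hcfix⟩ := hfixσ
    refine ⟨c, hc, fun L => ?_⟩
    have h2 := hcfix (Quotient.mk _ L)
    rw [hiterq] at h2
    exact Quotient.exact h2
  -- iterated action of β on simple objects
  have iter : ∀ (n : ℕ) (L),
      Nonempty ((S (β ^ n)).functor.obj L.obj.obj ≅ ((Fs^[n] L).obj.obj)⟦(n * m : ℤ)⟧) := by
    intro n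
    induction n with
    | zero =>
      intro L
      simp only [pow_zero, Function.iterate_zero, id_eq, Nat.cast_zero, zero_mul]
      exact ⟨hone.some.app L.obj.obj ≪≫ (shiftFunctorZero C ℤ).symm.app L.obj.obj⟩
    | succ n ih =>
      intro L
      obtain ⟨i⟩ := ih (Fs L)
      rw [pow_succ, Function.iterate_succ_apply]
      haveI := commShift (β ^ n)
      have i2 : (S β).functor.obj L.obj.obj ≅ ((Fs L).obj.obj)⟦(m : ℤ)⟧ :=
        (shiftFunctorCompIsoId C (-m : ℤ) (m : ℤ) (by ring)).symm.app
            ((S β).functor.obj L.obj.obj)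
          ≪≫ (shiftFunctor C (m : ℤ)).mapIso (Stmt6Aux.liftIso t Φ hβ L.obj)
      exact ⟨(hmul (β ^ n) β).some.app L.obj.obj
        ≪≫ (S (β ^ n)).functor.mapIso i2
        ≪≫ ((S (β ^ n)).functor.commShiftIso (m : ℤ)).app (Fs L).obj.obj
        ≪≫ (shiftFunctor C (m : ℤ)).mapIso i
        ≪≫ (shiftFunctorAdd' C ((n : ℤ) * m) (m : ℤ) (((n + 1 : ℕ) : ℤ) * m)
              (by push_cast; ring)).symm.app ((Fs^[n] (Fs L)).obj.obj)⟩
  obtain ⟨c, hc1, hcfix⟩ := hfix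
  -- Σ_{β^c} acts on all simples as the shift by c•m
  have key : ∀ L : ObjectProperty.FullSubcategory (tHeartProp t), Simple L →
      Nonempty ((S (β ^ c)).functor.obj L.obj ≅ L.obj⟦((c : ℤ) * m)⟧) := by
    intro L hL
    obtain ⟨i⟩ := iter c ⟨L, hL⟩
    obtain ⟨j⟩ := hcfix ⟨L, hL⟩
    have j' : (Fs^[c] ⟨L, hL⟩).obj.obj ≅ L.obj :=
      (ObjectProperty.ι _).mapIso ((ObjectProperty.ι _).mapIso j)
    exact ⟨i ≪≫ (shiftFunctor C ((c : ℤ) * m)).mapIso j'⟩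
  obtain ⟨j⟩ := hrigid (β ^ c) ((c : ℤ) * m) key
  set a : ℤ := (c : ℤ) * m with ha
  set b : G := β ^ c with hb
  -- the inverse is isomorphic to the negative shift
  have hbinv : Nonempty ((S b⁻¹).functor ≅ shiftFunctor C (-a)) := by
    have e1 : (S (1 : G)).functor ≅ (S b).functor ⋙ (S b⁻¹).functor := by
      have h5 := (hmul b⁻¹ b).some; rwa [inv_mul_cancel] at h5
    have e2 : (S b).functor ⋙ (S b⁻¹).functor ≅ 𝟭 C := e1.symm ≪≫ hone.some
    exact ⟨(Functor.leftUnitor _).symm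
      ≪≫ Functor.isoWhiskerRight (shiftFunctorCompIsoId C (-a) a (by ring)).symm _
      ≪≫ Functor.associator _ _ _
      ≪≫ Functor.isoWhiskerLeft _ (Functor.isoWhiskerRight j.symm _ ≪≫ e2)
      ≪≫ Functor.rightUnitor _⟩
  refine ⟨c, hc1, Subgroup.mem_center_iff.mpr ?_⟩
  intro g
  haveI := commShift g
  -- the conjugate g * b * g⁻¹ is also isomorphic to the shift by a
  have hconj : Nonempty ((S (g * b * g⁻¹)).functor ≅ shiftFunctor C a) := by
    have e3 : (S g⁻¹).functor ⋙ (S g).functor ≅ 𝟭 C := by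
      have h6 := (hmul g g⁻¹).some; rw [mul_inv_cancel] at h6
      exact h6.symm ≪≫ hone.some
    exact ⟨(hmul (g * b) g⁻¹).some
      ≪≫ Functor.isoWhiskerLeft _ ((hmul g b).some)
      ≪≫ Functor.isoWhiskerLeft _ (Functor.isoWhiskerRight j _)
      ≪≫ Functor.isoWhiskerLeft _ ((S g).functor.commShiftIso a)
      ≪≫ (Functor.associator _ _ _).symm
      ≪≫ Functor.isoWhiskerRight e3 _
      ≪≫ Functor.leftUnitor _⟩
  -- hence the commutator is trivial
  have hcent : g * b * g⁻¹ * b⁻¹ = 1 := by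
    apply hfaithful
    obtain ⟨j1⟩ := hconj
    obtain ⟨j2⟩ := hbinv
    exact ⟨(hmul (g * b * g⁻¹) b⁻¹).some
      ≪≫ Functor.isoWhiskerRight j2 _
      ≪≫ Functor.isoWhiskerLeft _ j1
      ≪≫ shiftFunctorCompIsoId C (-a) a (by ring)⟩
  calc g * b = (g * b * g⁻¹ * b⁻¹) * (b * g) := by group
    _ = 1 * (b * g) := by rw [hcent]
    _ = b * g := one_mul _
end

section
/- Let X be a topological space equipped with a continuous action of the topological group ℂˣ of nonzero complex numbers, and let p : Y → X be a covering map where Y is simply connected (hence path-connected) and locally path-connected. Then there exists a continuous map A : ℂ × Y → Y such that A(0, y) = y for all y ∈ Y, A(z + w, y) = A(z, A(w, y)) for all z, w ∈ ℂ and y ∈ Y, and p(A(z, y)) = e^z • p(y) for all z ∈ ℂ and y ∈ Y; that is, the ℂˣ-action on X lifts along p and along the exponential exp : ℂ → ℂˣ to a continuous action of the additive group ℂ on Y. -/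
open Set Topology

section Lifting

variable {E X A : Type*} [TopologicalSpace E] [TopologicalSpace X] [TopologicalSpace A]

/-- A partial lift of `F` along `p` on `Icc u v ×ˢ N`, with initial condition `g₀` at time 0. -/
def LiftsOn (p : E → X) (F : ℝ × A → X) (g₀ : A → E) (u v : ℝ) (N : Set A)
    (G : ℝ × A → E) : Prop :=
  ContinuousOn G (Icc u v ×ˢ N) ∧ (∀ a ∈ N, G (0, a) = g₀ a) ∧
    ∀ q ∈ Icc u v ×ˢ N, p (G q) = F q

variable {p : E → X} {F : ℝ × A → X} {g₀ : A → E}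

lemma extend_right (hF : Continuous F) {a : A}
    {u v v' : ℝ} (hu : u ≤ 0) (hv : 0 ≤ v)
    {N : Set A} (hN : N ∈ 𝓝 a) {G : ℝ × A → E} (hG : LiftsOn p F g₀ u v N G)
    {I : Type*} [TopologicalSpace I] {e : Bundle.Trivialization I p}
    {b₁ b₂ : ℝ} {M : Set A} (hM : M ∈ 𝓝 a)
    (hbox : Ioo b₁ b₂ ×ˢ M ⊆ F ⁻¹' e.baseSet)
    (hb₁ : b₁ < v) (hvv' : v ≤ v') (hv' : v' < b₂) :
    ∃ N' ∈ 𝓝 a, ∃ G', LiftsOn p F g₀ u v' N' G' := by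
  obtain ⟨hGc, hG0, hGp⟩ := hG
  set N' : Set A := N ∩ M with hN'
  -- the value `G (v, b)` lies in the source of the trivialization, for `b ∈ N'`
  have hbase : ∀ b ∈ N', F (v, b) ∈ e.baseSet := fun b hb =>
    hbox ⟨⟨hb₁, lt_of_le_of_lt hvv' hv'⟩, hb.2⟩
  have hsrc : ∀ b ∈ N', G (v, b) ∈ e.source := by
    intro b hb
    rw [e.mem_source, hGp (v, b) ⟨⟨hu.trans hv, le_refl v⟩, hb.1⟩]
    exact hbase b hb
  -- on the overlap `q.1 = v` the two formulas agree
  have hmatch : ∀ b ∈ N', e.toPartialHomeomorph.symm (F (v, b), (e (G (v, b))).2) = G (v, b) := by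
    intro b hb
    have h1 : (e (G (v, b))).1 = F (v, b) := by
      rw [e.coe_fst (hsrc b hb), hGp (v, b) ⟨⟨hu.trans hv, le_refl v⟩, hb.1⟩]
    have : (F (v, b), (e (G (v, b))).2) = e (G (v, b)) := by
      rw [← h1]
    rw [this]
    exact e.toPartialHomeomorph.left_inv (hsrc b hb)
  refine ⟨N', Filter.inter_mem hN hM,
    fun q => if q.1 ≤ v then G q else e.toPartialHomeomorph.symm (F q, (e (G (v, q.2))).2),
    ?_, ?_, ?_⟩
  · -- continuity
    have hsub1 : (Icc u v' ×ˢ N') ∩ closure {q : ℝ × A | q.1 ≤ v} ⊆ Icc u v ×ˢ N := by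
      intro q hq
      rw [(isClosed_le continuous_fst continuous_const).closure_eq] at hq
      exact ⟨⟨hq.1.1.1, hq.2⟩, hq.1.2.1⟩
    have hsub2 : (Icc u v' ×ˢ N') ∩ closure {q : ℝ × A | ¬ q.1 ≤ v} ⊆
        (Icc v v' ∩ Ioo b₁ b₂) ×ˢ N' := by
      intro q hq
      have h2 : v ≤ q.1 := by
        have hcl : closure {q : ℝ × A | ¬ q.1 ≤ v} ⊆ {q : ℝ × A | v ≤ q.1} := by
          rw [show {q : ℝ × A | ¬ q.1 ≤ v} = {q : ℝ × A | v < q.1} from by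
            ext q; simp [not_le]]
          exact closure_lt_subset_le continuous_const continuous_fst
        exact hcl hq.2
      exact ⟨⟨⟨h2, hq.1.1.2⟩, ⟨lt_of_lt_of_le hb₁ h2, lt_of_le_of_lt hq.1.1.2 hv'⟩⟩, hq.1.2⟩
    apply ContinuousOn.if
    · intro q hq
      have hqv : q.1 = v := by
        exact frontier_le_subset_eq continuous_fst continuous_const hq.2
      have : q = (v, q.2) := by rw [← hqv]
      rw [this]
      exact (hmatch q.2 hq.1.2).symm
    · exact hGc.mono hsub1
    · -- continuity of the second branch
      have hGv : ContinuousOn (fun b : A => G (v, b)) N' := by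
        have : ContinuousOn (fun b : A => ((v : ℝ), b)) N' :=
          (continuous_const.prodMk continuous_id).continuousOn
        exact hGc.comp this fun b hb => ⟨⟨hu.trans hv, le_refl v⟩, hb.1⟩
      have hin : ContinuousOn (fun q : ℝ × A => (F q, (e (G (v, q.2))).2))
          ((Icc v v' ∩ Ioo b₁ b₂) ×ˢ N') := by
        apply ContinuousOn.prodMk hF.continuousOn
        have h1 : ContinuousOn (fun q : ℝ × A => G (v, q.2)) ((Icc v v' ∩ Ioo b₁ b₂) ×ˢ N') :=
          hGv.comp continuous_snd.continuousOn fun q hq => hq.2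
        have hmaps : MapsTo (fun q : ℝ × A => G (v, q.2))
            ((Icc v v' ∩ Ioo b₁ b₂) ×ˢ N') e.source := fun q hq => hsrc q.2 hq.2
        have h2 : ContinuousOn (⇑e.toPartialHomeomorph ∘ fun q : ℝ × A => G (v, q.2))
            ((Icc v v' ∩ Ioo b₁ b₂) ×ˢ N') :=
          ContinuousOn.comp e.toPartialHomeomorph.continuousOn h1 hmaps
        exact continuous_snd.comp_continuousOn h2
      apply ContinuousOn.mono _ hsub2
      apply (e.toPartialHomeomorph.continuousOn_symm).comp hin
      intro q hq
      rw [e.mem_target]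
      exact hbox ⟨hq.1.2, hq.2.2⟩
  · intro b hb
    simp only [hv, if_pos]
    exact hG0 b hb.1
  · rintro ⟨t, b⟩ ⟨ht, hb⟩
    by_cases htv : t ≤ v
    · simp only [htv, if_pos]
      exact hGp (t, b) ⟨⟨ht.1, htv⟩, hb.1⟩
    · simp only [htv, if_neg, not_false_iff]
      have htgt : (F (t, b), (e (G (v, b))).2) ∈ e.target := by
        rw [e.mem_target]
        exact hbox ⟨⟨lt_trans hb₁ (not_le.1 htv), lt_of_le_of_lt ht.2 hv'⟩, hb.2⟩
      exact e.proj_symm_apply htgt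

end Lifting

section Lifting2

variable {E X A : Type*} [TopologicalSpace E] [TopologicalSpace X] [TopologicalSpace A]
variable {p : E → X} {F : ℝ × A → X} {g₀ : A → E}

lemma extend_left (hF : Continuous F) {a : A}
    {u u' v : ℝ} (hu : u ≤ 0) (hv : 0 ≤ v)
    {N : Set A} (hN : N ∈ 𝓝 a) {G : ℝ × A → E} (hG : LiftsOn p F g₀ u v N G)
    {I : Type*} [TopologicalSpace I] {e : Bundle.Trivialization I p}
    {b₁ b₂ : ℝ} {M : Set A} (hM : M ∈ 𝓝 a)
    (hbox : Ioo b₁ b₂ ×ˢ M ⊆ F ⁻¹' e.baseSet)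
    (hb₁ : b₁ < u') (hu'u : u' ≤ u) (hub₂ : u < b₂) :
    ∃ N' ∈ 𝓝 a, ∃ G', LiftsOn p F g₀ u' v N' G' := by
  obtain ⟨hGc, hG0, hGp⟩ := hG
  set N' : Set A := N ∩ M with hN'
  have hbase : ∀ b ∈ N', F (u, b) ∈ e.baseSet := fun b hb =>
    hbox ⟨⟨lt_of_lt_of_le hb₁ hu'u, hub₂⟩, hb.2⟩
  have hsrc : ∀ b ∈ N', G (u, b) ∈ e.source := by
    intro b hb
    rw [e.mem_source, hGp (u, b) ⟨⟨le_refl u, hu.trans hv⟩, hb.1⟩]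
    exact hbase b hb
  have hmatch : ∀ b ∈ N', e.toPartialHomeomorph.symm (F (u, b), (e (G (u, b))).2) = G (u, b) := by
    intro b hb
    have h1 : (e (G (u, b))).1 = F (u, b) := by
      rw [e.coe_fst (hsrc b hb), hGp (u, b) ⟨⟨le_refl u, hu.trans hv⟩, hb.1⟩]
    have : (F (u, b), (e (G (u, b))).2) = e (G (u, b)) := by rw [← h1]
    rw [this]
    exact e.toPartialHomeomorph.left_inv (hsrc b hb)
  refine ⟨N', Filter.inter_mem hN hM,
    fun q => if u ≤ q.1 then G q else e.toPartialHomeomorph.symm (F q, (e (G (u, q.2))).2),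
    ?_, ?_, ?_⟩
  · have hsub1 : (Icc u' v ×ˢ N') ∩ closure {q : ℝ × A | u ≤ q.1} ⊆ Icc u v ×ˢ N := by
      intro q hq
      rw [(isClosed_le continuous_const continuous_fst).closure_eq] at hq
      exact ⟨⟨hq.2, hq.1.1.2⟩, hq.1.2.1⟩
    have hsub2 : (Icc u' v ×ˢ N') ∩ closure {q : ℝ × A | ¬ u ≤ q.1} ⊆
        (Icc u' u ∩ Ioo b₁ b₂) ×ˢ N' := by
      intro q hq
      have h2 : q.1 ≤ u := by
        have hcl : closure {q : ℝ × A | ¬ u ≤ q.1} ⊆ {q : ℝ × A | q.1 ≤ u} := by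
          rw [show {q : ℝ × A | ¬ u ≤ q.1} = {q : ℝ × A | q.1 < u} from by
            ext q; simp [not_le]]
          exact closure_lt_subset_le continuous_fst continuous_const
        exact hcl hq.2
      exact ⟨⟨⟨hq.1.1.1, h2⟩, ⟨lt_of_lt_of_le hb₁ hq.1.1.1, lt_of_le_of_lt h2 hub₂⟩⟩, hq.1.2⟩
    apply ContinuousOn.if
    · intro q hq
      have hqv : u = q.1 := frontier_le_subset_eq continuous_const continuous_fst hq.2
      have : q = (u, q.2) := by rw [hqv]
      rw [this]
      exact (hmatch q.2 hq.1.2).symm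
    · exact hGc.mono hsub1
    · have hGv : ContinuousOn (fun b : A => G (u, b)) N' := by
        have : ContinuousOn (fun b : A => ((u : ℝ), b)) N' :=
          (continuous_const.prodMk continuous_id).continuousOn
        exact hGc.comp this fun b hb => ⟨⟨le_refl u, hu.trans hv⟩, hb.1⟩
      have hin : ContinuousOn (fun q : ℝ × A => (F q, (e (G (u, q.2))).2))
          ((Icc u' u ∩ Ioo b₁ b₂) ×ˢ N') := by
        apply ContinuousOn.prodMk hF.continuousOn
        have h1 : ContinuousOn (fun q : ℝ × A => G (u, q.2)) ((Icc u' u ∩ Ioo b₁ b₂) ×ˢ N') :=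
          hGv.comp continuous_snd.continuousOn fun q hq => hq.2
        have hmaps : MapsTo (fun q : ℝ × A => G (u, q.2))
            ((Icc u' u ∩ Ioo b₁ b₂) ×ˢ N') e.source := fun q hq => hsrc q.2 hq.2
        have h2 : ContinuousOn (⇑e.toPartialHomeomorph ∘ fun q : ℝ × A => G (u, q.2))
            ((Icc u' u ∩ Ioo b₁ b₂) ×ˢ N') :=
          ContinuousOn.comp e.toPartialHomeomorph.continuousOn h1 hmaps
        exact continuous_snd.comp_continuousOn h2
      apply ContinuousOn.mono _ hsub2
      apply (e.toPartialHomeomorph.continuousOn_symm).comp hin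
      intro q hq
      rw [e.mem_target]
      exact hbox ⟨hq.1.2, hq.2.2⟩
  · intro b hb
    simp only [hu, if_pos]
    exact hG0 b hb.1
  · rintro ⟨t, b⟩ ⟨ht, hb⟩
    by_cases htv : u ≤ t
    · simp only [htv, if_pos]
      exact hGp (t, b) ⟨⟨htv, ht.2⟩, hb.1⟩
    · simp only [htv, if_neg, not_false_iff]
      have htgt : (F (t, b), (e (G (u, b))).2) ∈ e.target := by
        rw [e.mem_target]
        exact hbox ⟨⟨lt_of_lt_of_le hb₁ ht.1, lt_trans (not_le.1 htv) hub₂⟩, hb.2⟩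
      exact e.proj_symm_apply htgt

end Lifting2

section Lifting3

variable {E X A : Type*} [TopologicalSpace E] [TopologicalSpace X] [TopologicalSpace A]
variable {p : E → X} {F : ℝ × A → X} {g₀ : A → E}

lemma fiber_nonempty (hp : IsCoveringMap p) (hF : Continuous F) (g₀ : A → E)
    (h₀ : ∀ a, p (g₀ a) = F (0, a)) (a : A) (t : ℝ) : Nonempty (p ⁻¹' {F (t, a)}) := by
  have hclopen : IsClopen (range p) := by
    refine ⟨?_, hp.isOpenMap.isOpen_range⟩
    rw [← isOpen_compl_iff, isOpen_iff_forall_mem_open]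
    intro x hx
    obtain ⟨-, U, hxU, hU, -, H, -⟩ := hp x
    refine ⟨U, ?_, hU, hxU⟩
    rintro y hyU ⟨e, rfl⟩
    exact hx ⟨((H ⟨e, hyU⟩).2 : E), (H ⟨e, hyU⟩).2.2⟩
  have hS : IsClopen ((fun s : ℝ => F (s, a)) ⁻¹' range p) :=
    hclopen.preimage (hF.comp (continuous_id.prodMk continuous_const))
  have hU := hS.eq_univ ⟨0, g₀ a, h₀ a⟩
  have ht : t ∈ (fun s : ℝ => F (s, a)) ⁻¹' range p := hU ▸ mem_univ t
  obtain ⟨e, he⟩ := ht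
  exact ⟨⟨e, he⟩⟩

lemma box_at (hp : IsCoveringMap p) (hF : Continuous F) (a : A) (t : ℝ)
    [Nonempty (p ⁻¹' {F (t, a)})] :
    ∃ e : Bundle.Trivialization (p ⁻¹' {F (t, a)}) p, ∃ ε > (0 : ℝ), ∃ M ∈ 𝓝 a,
      Ioo (t - ε) (t + ε) ×ˢ M ⊆ F ⁻¹' e.baseSet := by
  have h := hp (F (t, a))
  refine ⟨h.toTrivialization, ?_⟩
  have hW : F ⁻¹' h.toTrivialization.baseSet ∈ 𝓝 (t, a) :=
    (h.toTrivialization.open_baseSet.preimage hF).mem_nhds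
      (by exact h.mem_toTrivialization_baseSet)
  rw [mem_nhds_prod_iff] at hW
  obtain ⟨u, hu, M, hM, hsub⟩ := hW
  obtain ⟨ε, hε, hball⟩ := Metric.mem_nhds_iff.1 hu
  refine ⟨ε, hε, M, hM, fun q hq => hsub ⟨?_, hq.2⟩⟩
  rw [← Real.ball_eq_Ioo] at hq
  exact hball hq.1

lemma exists_liftsOn (hp : IsCoveringMap p) (hF : Continuous F) (hg₀ : Continuous g₀)
    (h₀ : ∀ a, p (g₀ a) = F (0, a)) (a : A) {n : ℝ} (hn : 0 ≤ n) :
    ∃ N ∈ 𝓝 a, ∃ G, LiftsOn p F g₀ (-n) n N G := by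
  set S := {t : ℝ | t ∈ Icc 0 n ∧ ∃ N ∈ 𝓝 a, ∃ G, LiftsOn p F g₀ (-t) t N G} with hS
  have h0S : 0 ∈ S := by
    refine ⟨⟨le_refl 0, hn⟩, univ, Filter.univ_mem, fun q => g₀ q.2,
      (hg₀.comp continuous_snd).continuousOn, fun b _ => rfl, ?_⟩
    rintro ⟨t, b⟩ ⟨ht, -⟩
    have ht0 : t = 0 := le_antisymm ht.2 (by simpa using ht.1)
    subst ht0
    exact h₀ b
  have hbdd : BddAbove S := ⟨n, fun t ht => ht.1.2⟩
  have hne : S.Nonempty := ⟨0, h0S⟩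
  set c := sSup S with hc
  have hc0 : 0 ≤ c := le_csSup hbdd h0S
  have hcn : c ≤ n := csSup_le hne fun t ht => ht.1.2
  haveI := fiber_nonempty hp hF g₀ h₀ a c
  haveI := fiber_nonempty hp hF g₀ h₀ a (-c)
  obtain ⟨e₁, ε₁, hε₁, M₁, hM₁, hbox₁⟩ := box_at hp hF a c
  obtain ⟨e₂, ε₂, hε₂, M₂, hM₂, hbox₂⟩ := box_at hp hF a (-c)
  set ε := min ε₁ ε₂ with hε'
  have hε : 0 < ε := lt_min hε₁ hε₂
  have hεε₁ : ε ≤ ε₁ := min_le_left _ _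
  have hεε₂ : ε ≤ ε₂ := min_le_right _ _
  obtain ⟨s, hsS, hs⟩ : ∃ s ∈ S, c - ε / 2 < s := exists_lt_of_lt_csSup hne (by linarith)
  have hsc : s ≤ c := le_csSup hbdd hsS
  have hs0 : 0 ≤ s := hsS.1.1
  set t' := min n (c + ε / 2) with ht'
  have hst' : s ≤ t' := le_min hsS.1.2 (by linarith)
  obtain ⟨N, hN, G, hG⟩ := hsS.2
  obtain ⟨N₁, hN₁, G₁, hG₁⟩ :=
    extend_right hF (neg_nonpos.2 hs0) hs0 hN hG hM₁ hbox₁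
      (by linarith) hst' (by have : t' ≤ c + ε / 2 := min_le_right _ _; linarith)
  obtain ⟨N₂, hN₂, G₂, hG₂⟩ :=
    extend_left hF (neg_nonpos.2 hs0) (hs0.trans hst') hN₁ hG₁ hM₂ hbox₂
      (by have : t' ≤ c + ε / 2 := min_le_right _ _; linarith)
      (neg_le_neg hst') (by linarith)
  have ht'S : t' ∈ S := ⟨⟨hs0.trans hst', min_le_left _ _⟩, N₂, hN₂, G₂, hG₂⟩
  have ht'c : t' ≤ c := le_csSup hbdd ht'S
  have hcn' : c = n := by
    refine le_antisymm hcn ?_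
    by_contra h
    push_neg at h
    have : c < t' := lt_min h (by linarith)
    linarith
  have ht'n : t' = n := by rw [ht', hcn']; exact min_eq_left (by linarith)
  rw [ht'n] at ht'S
  exact ht'S.2

end Lifting3

section Lifting4

variable {E X A : Type*} [TopologicalSpace E] [TopologicalSpace X] [TopologicalSpace A]
variable {p : E → X} {F : ℝ × A → X} {g₀ : A → E}

lemma line_unique (hp : IsCoveringMap p) {u₁ v₁ u₂ v₂ : ℝ}
    (hu₁ : u₁ ≤ 0) (hv₁ : 0 ≤ v₁) (hu₂ : u₂ ≤ 0) (hv₂ : 0 ≤ v₂)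
    {a : A} {N₁ N₂ : Set A} (ha₁ : a ∈ N₁) (ha₂ : a ∈ N₂) {G₁ G₂ : ℝ × A → E}
    (h1 : LiftsOn p F g₀ u₁ v₁ N₁ G₁) (h2 : LiftsOn p F g₀ u₂ v₂ N₂ G₂)
    {t : ℝ} (ht : t ∈ Icc (max u₁ u₂) (min v₁ v₂)) : G₁ (t, a) = G₂ (t, a) := by
  have hmem₁ : ∀ r ∈ Icc (max u₁ u₂) (min v₁ v₂), ((r : ℝ), a) ∈ Icc u₁ v₁ ×ˢ N₁ :=
    fun r hr => ⟨⟨(le_max_left _ _).trans hr.1, hr.2.trans (min_le_left _ _)⟩, ha₁⟩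
  have hmem₂ : ∀ r ∈ Icc (max u₁ u₂) (min v₁ v₂), ((r : ℝ), a) ∈ Icc u₂ v₂ ×ˢ N₂ :=
    fun r hr => ⟨⟨(le_max_right _ _).trans hr.1, hr.2.trans (min_le_right _ _)⟩, ha₂⟩
  have key := hp.eqOn_of_comp_eqOn (s := Icc (max u₁ u₂) (min v₁ v₂))
    (g₁ := fun r : ℝ => G₁ (r, a)) (g₂ := fun r : ℝ => G₂ (r, a)) isPreconnected_Icc
    (h1.1.comp ((continuous_id.prodMk continuous_const).continuousOn) hmem₁)
    (h2.1.comp ((continuous_id.prodMk continuous_const).continuousOn) hmem₂)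
    (fun r hr => by
      show p (G₁ (r, a)) = p (G₂ (r, a))
      rw [h1.2.2 _ (hmem₁ r hr), h2.2.2 _ (hmem₂ r hr)])
    (a := 0) ⟨max_le hu₁ hu₂, le_min hv₁ hv₂⟩
    (by show G₁ (0, a) = G₂ (0, a); rw [h1.2.1 a ha₁, h2.2.1 a ha₂])
  exact key ht

theorem exists_global_lift (hp : IsCoveringMap p) (hF : Continuous F) (hg₀ : Continuous g₀)
    (h₀ : ∀ a, p (g₀ a) = F (0, a)) :
    ∃ G : ℝ × A → E, Continuous G ∧ (∀ a, G (0, a) = g₀ a) ∧ ∀ q, p (G q) = F q := by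
  choose N hN G hG using fun (a : A) (n : ℕ) =>
    exists_liftsOn hp hF hg₀ h₀ a (n := (n : ℝ)) (Nat.cast_nonneg n)
  have haN : ∀ a n, a ∈ N a n := fun a n => mem_of_mem_nhds (hN a n)
  have agree : ∀ (a₁ a₂ : A) (n₁ n₂ : ℕ) (b : A), b ∈ N a₁ n₁ → b ∈ N a₂ n₂ →
      ∀ t : ℝ, |t| ≤ n₁ → |t| ≤ n₂ → G a₁ n₁ (t, b) = G a₂ n₂ (t, b) := by
    intro a₁ a₂ n₁ n₂ b hb₁ hb₂ t h₁ h₂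
    have h₁' := abs_le.1 h₁
    have h₂' := abs_le.1 h₂
    exact line_unique hp (neg_nonpos.2 (Nat.cast_nonneg n₁)) (Nat.cast_nonneg n₁)
      (neg_nonpos.2 (Nat.cast_nonneg n₂)) (Nat.cast_nonneg n₂) hb₁ hb₂ (hG a₁ n₁) (hG a₂ n₂)
      ⟨max_le h₁'.1 h₂'.1, le_min h₁'.2 h₂'.2⟩
  have habs : ∀ t : ℝ, |t| ≤ (⌈|t|⌉₊ : ℝ) := fun t => Nat.le_ceil _
  refine ⟨fun q => G q.2 ⌈|q.1|⌉₊ q, ?_, ?_, ?_⟩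
  · rw [continuous_iff_continuousAt]
    rintro ⟨t₀, a₀⟩
    set m : ℕ := ⌈|t₀|⌉₊ + 1 with hm
    have ht₀m : |t₀| < m := lt_of_le_of_lt (habs t₀) (by exact_mod_cast lt_add_one (⌈|t₀|⌉₊ : ℝ))
    have ht₀m' := abs_lt.1 ht₀m
    have hev : Ioo (-(m : ℝ)) m ×ˢ N a₀ m ∈ 𝓝 ((t₀ : ℝ), a₀) :=
      prod_mem_nhds (Ioo_mem_nhds ht₀m'.1 ht₀m'.2) (hN a₀ m)
    have hcont : ContinuousAt (G a₀ m) (t₀, a₀) :=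
      (hG a₀ m).1.continuousAt
        (prod_mem_nhds (Icc_mem_nhds ht₀m'.1 ht₀m'.2) (hN a₀ m))
    apply hcont.congr
    apply Filter.eventuallyEq_of_mem hev
    rintro ⟨t, b⟩ ⟨ht, hb⟩
    have htm : |t| ≤ (m : ℝ) := le_of_lt (abs_lt.2 ⟨ht.1, ht.2⟩)
    exact (agree b a₀ ⌈|t|⌉₊ m b (haN b _) hb t (habs t) htm).symm
  · intro a
    have h0 : ⌈|(0 : ℝ)|⌉₊ = 0 := by simp
    simpa [h0] using (hG a 0).2.1 a (haN a 0)
  · rintro ⟨t, b⟩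
    have h := abs_le.1 (habs t)
    exact (hG b ⌈|t|⌉₊).2.2 (t, b) ⟨⟨h.1, h.2⟩, haN b _⟩

end Lifting4

/-- A continuous action of `ℂˣ` on `X` lifts, along a universal covering `p : Y → X` and the
exponential `exp : ℂ → ℂˣ`, to a continuous action of the additive group `ℂ` on `Y`. -/
theorem stmt_7 {X : Type*} [TopologicalSpace X] [MulAction ℂˣ X] [ContinuousSMul ℂˣ X]
    {Y : Type*} [TopologicalSpace Y] [SimplyConnectedSpace Y] [LocallyPathConnectedSpace Y]
    (p : Y → X) (hp : IsCoveringMap p) :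
    ∃ A : ℂ × Y → Y, Continuous A ∧
      (∀ y : Y, A (0, y) = y) ∧
      (∀ (z w : ℂ) (y : Y), A (z + w, y) = A (z, A (w, y))) ∧
      (∀ (z : ℂ) (y : Y),
        p (A (z, y)) = (Units.mk0 (Complex.exp z) (Complex.exp_ne_zero z)) • p y) := by
  classical
  set σ : ℂ → ℂˣ := fun z => Units.mk0 (Complex.exp z) (Complex.exp_ne_zero z) with hσ
  have hσcont : Continuous σ := by
    rw [Units.continuous_iff]
    refine ⟨Complex.continuous_exp, ?_⟩
    simp only [hσ, Units.val_inv_eq_inv_val, Units.val_mk0]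
    exact Complex.continuous_exp.inv₀ fun z => Complex.exp_ne_zero z
  have hσadd : ∀ z w : ℂ, σ (z + w) = σ z * σ w := by
    intro z w
    ext
    simp [σ, Complex.exp_add]
  have hσ0 : σ 0 = 1 := by ext; simp [σ]
  -- Step 1: lift `(t, y) ↦ exp (t * I) • p y` starting from the identity at `t = 0`.
  set F₁ : ℝ × Y → X := fun q => σ ((q.1 : ℂ) * Complex.I) • p q.2 with hF₁
  have hF₁c : Continuous F₁ :=
    (hσcont.comp ((Complex.continuous_ofReal.comp continuous_fst).mul
      continuous_const)).smul (hp.continuous.comp continuous_snd)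
  have h₁0 : ∀ y : Y, p (id y) = F₁ (0, y) := by
    intro y
    simp [hF₁, hσ0]
  obtain ⟨B, hBc, hB0, hBp⟩ := exists_global_lift hp hF₁c continuous_id h₁0
  -- Step 2: lift `(s, (t, y)) ↦ exp (s + t * I) • p y` starting from `B` at `s = 0`.
  set F₂ : ℝ × (ℝ × Y) → X := fun q => σ ((q.1 : ℂ) + (q.2.1 : ℂ) * Complex.I) • p q.2.2
    with hF₂
  have hF₂c : Continuous F₂ :=
    (hσcont.comp ((Complex.continuous_ofReal.comp continuous_fst).add
      ((Complex.continuous_ofReal.comp (continuous_fst.comp continuous_snd)).mul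
        continuous_const))).smul (hp.continuous.comp (continuous_snd.comp continuous_snd))
  have h₂0 : ∀ r : ℝ × Y, p (B r) = F₂ (0, r) := by
    intro r
    rw [hBp r]
    simp [hF₁, hF₂]
  obtain ⟨C, hCc, hC0, hCp⟩ := exists_global_lift hp hF₂c hBc h₂0
  set A : ℂ × Y → Y := fun q => C (q.1.re, q.1.im, q.2) with hA
  have hAc : Continuous A :=
    hCc.comp ((Complex.continuous_re.comp continuous_fst).prodMk
      ((Complex.continuous_im.comp continuous_fst).prodMk continuous_snd))
  have hApA : ∀ (z : ℂ) (y : Y), p (A (z, y)) = σ z • p y := by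
    intro z y
    show p (C (z.re, z.im, y)) = σ z • p y
    rw [hCp (z.re, (z.im, y))]
    simp [hF₂, Complex.re_add_im]
  have hA0 : ∀ y : Y, A (0, y) = y := by
    intro y
    show C (Complex.re 0, Complex.im 0, y) = y
    simp only [Complex.zero_re, Complex.zero_im]
    rw [hC0 ((0 : ℝ), y), hB0 y]
    rfl
  have hkey : (fun q : ℂ × ℂ × Y => A (q.1 + q.2.1, q.2.2)) =
      fun q : ℂ × ℂ × Y => A (q.1, A (q.2.1, q.2.2)) := by
    have hy : Nonempty Y := inferInstance
    refine hp.eq_of_comp_eq ?_ ?_ ?_ ((0 : ℂ), (0 : ℂ), Classical.arbitrary Y) ?_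
    · exact hAc.comp ((continuous_fst.add (continuous_fst.comp continuous_snd)).prodMk
        (continuous_snd.comp continuous_snd))
    · exact hAc.comp (continuous_fst.prodMk (hAc.comp
        ((continuous_fst.comp continuous_snd).prodMk (continuous_snd.comp continuous_snd))))
    · funext q
      show p (A (q.1 + q.2.1, q.2.2)) = p (A (q.1, A (q.2.1, q.2.2)))
      rw [hApA, hApA, hApA, hσadd, mul_smul]
    · show A (0 + 0, Classical.arbitrary Y) = A (0, A (0, Classical.arbitrary Y))
      rw [add_zero, hA0, hA0]
  refine ⟨A, hAc, hA0, ?_, fun z y => hApA z y⟩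
  intro z w y
  exact congrFun hkey (z, w, y)
end
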